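/- Let Ω ⊂ ℂ̂ be a hyperbolic multiply connected domain, and let π : 𝔻 → Ω be a universal covering with deck transformation group Γ. If e^{iθ} ∈ Λ_NT and η ⊂ 𝔻 is a curve landing non-tangentially at e^{iθ}, then Cl_η(π, e^{iθ}) ∩ Ω ≠ ∅; in particular, Cl_A(π, e^{iθ}) ∩ Ω ≠ ∅. -/

import Mathlib

open Complex Metric Set Filter Topology OnePoint MeasureTheory

noncomputable section

/-- The Riemann sphere, modelled as the one-point compactification of `ℂ`. -/
abbrev RSphere : Type := OnePoint ℂ

/-- The open unit disk `𝔻` as a subset of `ℂ`. -/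
def unitD : Set ℂ := Metric.ball 0 1

/-- The unit circle `∂𝔻`. -/
def unitC : Set ℂ := Metric.sphere 0 1

/-- A map into the Riemann sphere is holomorphic (meromorphic) at `z` if near `z` it is either
given by an analytic `ℂ`-valued function, or its reciprocal is (with value `∞` at zeros). -/
def SphHolomorphicAt (f : ℂ → RSphere) (z : ℂ) : Prop :=
  (∃ g : ℂ → ℂ, AnalyticAt ℂ g z ∧ ∀ᶠ w in 𝓝 z, f w = (g w : RSphere)) ∨
  (∃ g : ℂ → ℂ, AnalyticAt ℂ g z ∧ g z = 0 ∧
     ∀ᶠ w in 𝓝 z, (g w = 0 → f w = ∞) ∧ (g w ≠ 0 → f w = (((g w)⁻¹ : ℂ) : RSphere)))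

def SphHolomorphicOn (f : ℂ → RSphere) (s : Set ℂ) : Prop :=
  ∀ z ∈ s, SphHolomorphicAt f z

/-- A domain: an open connected subset of the Riemann sphere. -/
structure IsSphDomain (Ω : Set RSphere) : Prop where
  isOpen : IsOpen Ω
  isConnected : IsConnected Ω

/-- A hyperbolic domain: omits at least three points of the sphere. -/
def IsHyperbolicDomain (Ω : Set RSphere) : Prop :=
  IsSphDomain Ω ∧ ∃ a b c : RSphere, a ∉ Ω ∧ b ∉ Ω ∧ c ∉ Ω ∧ a ≠ b ∧ a ≠ c ∧ b ≠ c

/-- Multiply connected: the complement has more than one connected component. -/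
def IsMultiplyConnected (Ω : Set RSphere) : Prop :=
  ∃ x ∈ Ωᶜ, ∃ y ∈ Ωᶜ, connectedComponentIn Ωᶜ x ≠ connectedComponentIn Ωᶜ y

/-- Connectivity greater than two: the complement has at least three connected components. -/
def ConnectivityGtTwo (Ω : Set RSphere) : Prop :=
  ∃ x ∈ Ωᶜ, ∃ y ∈ Ωᶜ, ∃ z ∈ Ωᶜ,
    connectedComponentIn Ωᶜ x ≠ connectedComponentIn Ωᶜ y ∧
    connectedComponentIn Ωᶜ x ≠ connectedComponentIn Ωᶜ z ∧
    connectedComponentIn Ωᶜ y ≠ connectedComponentIn Ωᶜ z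

/-- A universal covering `π : 𝔻 → Ω`: a holomorphic surjective covering map of `Ω`
defined on the (simply connected) unit disk. -/
structure IsUniversalCovering (f : ℂ → RSphere) (Ω : Set RSphere) : Prop where
  mapsTo : MapsTo f unitD Ω
  surjOn : SurjOn f unitD Ω
  holo : SphHolomorphicOn f unitD
  covering : IsCoveringMap (fun z : unitD => (⟨f z.1, mapsTo z.2⟩ : Ω))

/-- A deck transformation of the covering `f`: a holomorphic automorphism `γ` of `𝔻`
with `f ∘ γ = f`. -/
structure IsDeckTransformation (f : ℂ → RSphere) (γ : ℂ → ℂ) : Prop where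
  bijOn : BijOn γ unitD unitD
  holo : DifferentiableOn ℂ γ unitD
  deck : ∀ z ∈ unitD, f (γ z) = f z

/-- The Stolz angle `A_{α,ρ}(ζ)` at `ζ ∈ ∂𝔻`. -/
def stolzAngle (ζ : ℂ) (α ρ : ℝ) : Set ℂ :=
  {z | z ∈ unitD ∧ |Complex.arg ζ - Complex.arg (ζ - z)| < α ∧ ‖ζ - z‖ < ρ}

/-- The limit set `Λ` of the deck transformation group of `f`. -/
def limitSet (f : ℂ → RSphere) : Set ℂ :=
  {ζ | ζ ∈ unitC ∧ ∃ γ : ℕ → ℂ → ℂ, (∀ n, IsDeckTransformation f (γ n)) ∧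
    Tendsto (fun n => γ n 0) atTop (𝓝 ζ)}

/-- The non-tangential limit set of a family `S` of disk automorphisms. -/
def ntLimitSetOf (S : Set (ℂ → ℂ)) : Set ℂ :=
  {ζ | ζ ∈ unitC ∧ ∃ γ : ℕ → ℂ → ℂ, (∀ n, γ n ∈ S) ∧
    Tendsto (fun n => γ n 0) atTop (𝓝 ζ) ∧
    ∃ α ρ : ℝ, 0 < α ∧ α < Real.pi / 2 ∧ 0 < ρ ∧ ∀ n, γ n 0 ∈ stolzAngle ζ α ρ}

/-- The non-tangential limit set `Λ_NT` of the deck transformation group of `f`. -/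
def ntLimitSet (f : ℂ → RSphere) : Set ℂ :=
  ntLimitSetOf {γ | IsDeckTransformation f γ}

/-- The radial limit of `f` at `ζ ∈ ∂𝔻` equals `L`. -/
def radialLimitAt (f : ℂ → RSphere) (ζ : ℂ) (L : RSphere) : Prop :=
  Tendsto (fun t : ℝ => f ((t : ℂ) * ζ)) (𝓝[<] (1 : ℝ)) (𝓝 L)

/-- The radial limit of `f` at `ζ` exists. -/
def HasRadialLimit (f : ℂ → RSphere) (ζ : ℂ) : Prop :=
  ∃ L : RSphere, radialLimitAt f ζ L

/-- A curve `η : [0,1) → 𝔻` lands at `ζ`. -/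
def LandsAt (η : ℝ → ℂ) (ζ : ℂ) : Prop :=
  ContinuousOn η (Ico (0:ℝ) 1) ∧ MapsTo η (Ico (0:ℝ) 1) unitD ∧
    Tendsto η (𝓝[<] (1:ℝ)) (𝓝 ζ)

/-- A curve lands non-tangentially at `ζ`: it lands at `ζ` and is eventually contained
in some Stolz angle at `ζ`. -/
def LandsNontangentiallyAt (η : ℝ → ℂ) (ζ : ℂ) : Prop :=
  LandsAt η ζ ∧ ∃ α ρ : ℝ, 0 < α ∧ α < Real.pi / 2 ∧ 0 < ρ ∧
    ∀ᶠ t in 𝓝[<] (1:ℝ), η t ∈ stolzAngle ζ α ρ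

/-- The cluster set of `f` along the curve `η`. -/
def clusterAlong (f : ℂ → RSphere) (η : ℝ → ℂ) : Set RSphere :=
  {w | ∃ t : ℕ → ℝ, (∀ n, t n ∈ Ico (0:ℝ) 1) ∧ Tendsto t atTop (𝓝 1) ∧
    Tendsto (fun n => f (η (t n))) atTop (𝓝 w)}

/-- The radial cluster set of `f` at `ζ`. -/
def radialCluster (f : ℂ → RSphere) (ζ : ℂ) : Set RSphere :=
  clusterAlong f (fun t => (t : ℂ) * ζ)

/-- The angular cluster set of `f` at `ζ`: union of cluster sets along all curves
landing non-tangentially at `ζ`. -/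
def angularCluster (f : ℂ → RSphere) (ζ : ℂ) : Set RSphere :=
  ⋃ η ∈ {η : ℝ → ℂ | LandsNontangentiallyAt η ζ}, clusterAlong f η

/-- `ζ ∈ ∂𝔻` is of escaping type: the image of the radius at `ζ` eventually leaves
every compact subset of `Ω`. -/
def EscapingType (f : ℂ → RSphere) (Ω : Set RSphere) (ζ : ℂ) : Prop :=
  ∀ K : Set RSphere, IsCompact K → K ⊆ Ω → ∀ᶠ (t : ℝ) in 𝓝[<] (1:ℝ), f ((t:ℂ) * ζ) ∉ K

/-- `ζ ∈ ∂𝔻` is of bounded type: the image of the radius is compactly contained in `Ω`. -/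
def BoundedType (f : ℂ → RSphere) (Ω : Set RSphere) (ζ : ℂ) : Prop :=
  ∃ K : Set RSphere, IsCompact K ∧ K ⊆ Ω ∧ ∀ t ∈ Ico (0:ℝ) 1, f ((t:ℂ) * ζ) ∈ K

/-- `ζ ∈ ∂𝔻` is of bungee type: neither escaping nor bounded. -/
def BungeeType (f : ℂ → RSphere) (Ω : Set RSphere) (ζ : ℂ) : Prop :=
  ¬ EscapingType f Ω ζ ∧ ¬ BoundedType f Ω ζ

/-- A boundary component of `Ω`: a connected component of `∂Ω`. -/
def IsBoundaryComponent (Ω B : Set RSphere) : Prop :=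
  ∃ x ∈ frontier Ω, B = connectedComponentIn (frontier Ω) x

/-- An isolated boundary component: it has a neighbourhood disjoint from all other
boundary components. -/
def IsIsolatedBoundaryComponent (Ω B : Set RSphere) : Prop :=
  IsBoundaryComponent Ω B ∧ ∃ U : Set RSphere, IsOpen U ∧ B ⊆ U ∧ U ∩ frontier Ω ⊆ B

/-- The landing set of a curve `η : [0,1) → ℂ̂`. -/
def landingSet (η : ℝ → RSphere) : Set RSphere :=
  {w | ∃ t : ℕ → ℝ, (∀ n, t n ∈ Ico (0:ℝ) 1) ∧ Tendsto t atTop (𝓝 1) ∧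
    Tendsto (fun n => η (t n)) atTop (𝓝 w)}

/-- `p ∈ ∂Ω` is accessible from `Ω`: some curve in `Ω` lands at `p`. -/
def AccessiblePoint (Ω : Set RSphere) (p : RSphere) : Prop :=
  p ∈ frontier Ω ∧ ∃ η : ℝ → RSphere, ContinuousOn η (Ico (0:ℝ) 1) ∧
    MapsTo η (Ico (0:ℝ) 1) Ω ∧ Tendsto η (𝓝[<] (1:ℝ)) (𝓝 p)

/-- `ζ ∈ ∂𝔻` is an ambiguous point for `f`: two curves landing at `ζ` have disjoint
cluster sets. -/
def AmbiguousPoint (f : ℂ → RSphere) (ζ : ℂ) : Prop :=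
  ζ ∈ unitC ∧ ∃ η₁ η₂ : ℝ → ℂ, LandsAt η₁ ζ ∧ LandsAt η₂ ζ ∧
    clusterAlong f η₁ ∩ clusterAlong f η₂ = ∅

/-- A true crosscut of `Ω`: an open Jordan arc in `Ω` with two distinct endpoints on the
same boundary component of `Ω`, splitting `Ω` into exactly two connected components,
exactly one of which is simply connected. -/
def IsTrueCrosscut (Ω C : Set RSphere) : Prop :=
  C ⊆ Ω ∧
  (∃ g : ℝ → RSphere, ContinuousOn g (Icc (0:ℝ) 1) ∧ InjOn g (Icc (0:ℝ) 1) ∧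
     C = g '' Ioo (0:ℝ) 1 ∧ g 0 ∈ frontier Ω ∧
     g 1 ∈ connectedComponentIn (frontier Ω) (g 0) ∧ g 0 ≠ g 1) ∧
  (∃ u ∈ Ω \ C, ∃ v ∈ Ω \ C,
     connectedComponentIn (Ω \ C) u ≠ connectedComponentIn (Ω \ C) v ∧
     (∀ w ∈ Ω \ C, connectedComponentIn (Ω \ C) w = connectedComponentIn (Ω \ C) u ∨
        connectedComponentIn (Ω \ C) w = connectedComponentIn (Ω \ C) v) ∧
     SimplyConnectedSpace ↥(connectedComponentIn (Ω \ C) u) ∧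
     ¬ SimplyConnectedSpace ↥(connectedComponentIn (Ω \ C) v))

/-- `N` is the true crosscut neighbourhood of the true crosscut `C` in `Ω`: the simply
connected component of `Ω ∖ C`. -/
def IsTrueCrosscutNbhd (Ω C N : Set RSphere) : Prop :=
  IsTrueCrosscut Ω C ∧ (∃ u ∈ Ω \ C, N = connectedComponentIn (Ω \ C) u) ∧
    SimplyConnectedSpace ↥N

/-- A Cantor subset of the unit circle: nonempty, compact, perfect and totally
disconnected. -/
def IsCantorSubsetOfCircle (S : Set ℂ) : Prop :=
  S ⊆ unitC ∧ S.Nonempty ∧ IsCompact S ∧ Perfect S ∧ IsTotallyDisconnected S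

/-- `ζ ∈ ∂𝔻` is a parabolic fixed point of the deck transformation group of `f`:
it is the unique fixed point in the closed disk of (the continuous extension of) some
deck transformation, which has no fixed point in `𝔻`. -/
def IsParabolicFixedPoint (f : ℂ → RSphere) (ζ : ℂ) : Prop :=
  ζ ∈ unitC ∧ ∃ γ γe : ℂ → ℂ, IsDeckTransformation f γ ∧
    ContinuousOn γe (Metric.closedBall (0:ℂ) 1) ∧ EqOn γe γ unitD ∧
    MapsTo γe (Metric.closedBall (0:ℂ) 1) (Metric.closedBall (0:ℂ) 1) ∧
    (∀ z ∈ unitD, γe z ≠ z) ∧ γe ζ = ζ ∧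
    (∀ w ∈ Metric.closedBall (0:ℂ) 1, γe w = w → w = ζ)

/-- The subgroup of deck transformations generated by a family `F` (as functions acting
on the disk). -/
inductive DeckGen (f : ℂ → RSphere) (F : Set (ℂ → ℂ)) : (ℂ → ℂ) → Prop where
  | of (γ : ℂ → ℂ) (h : γ ∈ F) : DeckGen f F γ
  | one : DeckGen f F id
  | mul (γ₁ γ₂ : ℂ → ℂ) (h₁ : DeckGen f F γ₁) (h₂ : DeckGen f F γ₂) : DeckGen f F (γ₁ ∘ γ₂)
  | inv (γ δ : ℂ → ℂ) (h : DeckGen f F γ) (hδ : IsDeckTransformation f δ)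
      (hinv : ∀ z ∈ unitD, δ (γ z) = z) : DeckGen f F δ

/-!
Let `γₙ` be deck transformations with `γₙ 0 → ζ` inside a Stolz angle, and let `η` land
non-tangentially at `ζ`. By continuity, `η` crosses each small circle `‖ζ - z‖ = ‖ζ - γₙ 0‖`,
and two points of a Stolz angle of opening `κ` at the same small distance from `ζ` are at
pseudo-hyperbolic distance at most `c = 2 sin κ / (1 + sin κ) < 1`. The Schwarz–Pick lemma for
`γₙ⁻¹` then writes such a crossing point as `γₙ z` with `‖z‖ ≤ c`, so the covering `f` takes
there a value in the compact set `f (closedBall 0 c) ⊆ Ω`, and these values accumulate in `Ω`.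
-/

open scoped ComplexConjugate

section InverseOfHolomorphic

theorem not_eventually_eq_of_injOn {X Y : Type*} [TopologicalSpace X] {g : X → Y} {s : Set X}
    {x : X} [(𝓝[≠] x).NeBot] (hs : s ∈ 𝓝 x) (hinj : InjOn g s) :
    ¬ ∀ᶠ y in 𝓝 x, g y = g x := by
  intro h
  obtain ⟨y, ⟨hgy, hys⟩, hyx⟩ :=
    (((h.and hs).filter_mono nhdsWithin_le_nhds).and
      (self_mem_nhdsWithin : {x}ᶜ ∈ 𝓝[≠] x)).exists
  exact hyx (hinj hys (mem_of_mem_nhds hs) hgy)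

variable {U V : Set ℂ} {γ δ : ℂ → ℂ} {z w : ℂ}

theorem nhds_le_map_nhds_of_injOn (hU : IsOpen U) (hd : DifferentiableOn ℂ γ U)
    (hinj : InjOn γ U) (hz : z ∈ U) : 𝓝 (γ z) ≤ map γ (𝓝 z) :=
  (hd.analyticAt (hU.mem_nhds hz)).eventually_constant_or_nhds_le_map_nhds.resolve_left
    (not_eventually_eq_of_injOn (hU.mem_nhds hz) hinj)

theorem eventually_deriv_ne_zero_of_injOn (hU : IsOpen U) (hd : DifferentiableOn ℂ γ U)
    (hinj : InjOn γ U) (hz : z ∈ U) : ∀ᶠ y in 𝓝[≠] z, deriv γ y ≠ 0 := by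
  refine ((hd.analyticOnNhd hU).deriv z hz).eventually_eq_zero_or_eventually_ne_zero.resolve_left
    fun h => not_eventually_eq_of_injOn (hU.mem_nhds hz) hinj ?_
  obtain ⟨ε, hε, hball⟩ := eventually_nhds_iff_ball.1 (h.and (hU.eventually_mem hz))
  filter_upwards [ball_mem_nhds z hε] with y hy
  exact isOpen_ball.is_const_of_deriv_eq_zero (convex_ball z ε).isPreconnected
    (hd.mono fun x hx => (hball x hx).2) (fun x hx => (hball x hx).1) hy (mem_ball_self hε)

theorem continuousAt_of_invOn (hU : IsOpen U) (hd : DifferentiableOn ℂ γ U)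
    (hinv : InvOn δ γ U V) (hδ : MapsTo δ V U) (hw : w ∈ V) : ContinuousAt δ w := by
  have hz := hδ hw
  have hmap := nhds_le_map_nhds_of_injOn hU hd hinv.1.injOn hz
  rw [hinv.2 hw] at hmap
  intro N hN
  have himg : γ '' (N ∩ U) ∈ 𝓝 w := hmap (image_mem_map (inter_mem hN (hU.mem_nhds hz)))
  refine mem_map.2 (mem_of_superset himg ?_)
  rintro _ ⟨u, ⟨huN, huU⟩, rfl⟩
  simpa only [mem_preimage, hinv.1 huU] using huN

/-- `δ` is continuous, and differentiable off the discrete set where `deriv γ ∘ δ` vanishes by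
the inverse function theorem; the removable singularity theorem handles the remaining points. -/
theorem differentiableOn_of_invOn (hU : IsOpen U) (hV : IsOpen V) (hd : DifferentiableOn ℂ γ U)
    (hinv : InvOn δ γ U V) (hδ : MapsTo δ V U) : DifferentiableOn ℂ δ V := by
  intro w hw
  have hcont := continuousAt_of_invOn hU hd hinv hδ hw
  have hpunct : Tendsto δ (𝓝[≠] w) (𝓝[≠] (δ w)) :=
    tendsto_nhdsWithin_of_tendsto_nhds_of_eventually_within _ (hcont.mono_left nhdsWithin_le_nhds)
      (by
        filter_upwards [nhdsWithin_le_nhds (hV.mem_nhds hw), self_mem_nhdsWithin] with y hy hyw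
        exact fun h => hyw (hinv.2.injOn hy hw h))
  have hdiff : ∀ᶠ y in 𝓝[≠] w, DifferentiableAt ℂ δ y := by
    filter_upwards
      [hpunct.eventually (eventually_deriv_ne_zero_of_injOn hU hd hinv.1.injOn (hδ hw)),
        nhdsWithin_le_nhds (hV.mem_nhds hw)] with y hy hyV
    exact (HasStrictDerivAt.of_local_left_inverse (continuousAt_of_invOn hU hd hinv hδ hyV)
      (hd.analyticAt (hU.mem_nhds (hδ hyV))).hasStrictDerivAt hy
      (eventually_of_mem (hV.mem_nhds hyV) hinv.2)).hasDerivAt.differentiableAt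
  exact (analyticAt_of_differentiable_on_punctured_nhds_of_continuousAt hdiff
    hcont).differentiableAt.differentiableWithinAt

end InverseOfHolomorphic

section SchwarzPick

def pseudoHyperbolicDist (a b : ℂ) : ℝ := ‖a - b‖ / ‖1 - conj b * a‖

def mobius (b u : ℂ) : ℂ := (u + b) / (1 + conj b * u)

variable {a b : ℂ}

theorem one_add_conj_mul_ne_zero {u : ℂ} (hb : ‖b‖ < 1) (hu : ‖u‖ < 1) : 1 + conj b * u ≠ 0 := by
  intro h
  have : ‖conj b * u‖ < 1 := by
    rw [norm_mul, Complex.norm_conj]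
    nlinarith [norm_nonneg b, norm_nonneg u]
  rw [eq_neg_of_add_eq_zero_right h] at this
  simp at this

theorem normSq_one_add_conj_mul_sub_normSq_add (b u : ℂ) :
    normSq (1 + conj b * u) - normSq (u + b) = (1 - normSq b) * (1 - normSq u) := by
  simp only [normSq_apply, add_re, add_im, mul_re, mul_im, one_re, one_im, conj_re, conj_im]
  ring

theorem mapsTo_mobius (hb : b ∈ ball (0 : ℂ) 1) : MapsTo (mobius b) (ball 0 1) (ball 0 1) := by
  intro u hu
  rw [mem_ball_zero_iff] at hb hu ⊢
  rw [mobius, norm_div, div_lt_one (norm_pos_iff.2 (one_add_conj_mul_ne_zero hb hu)),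
    ← sq_lt_sq₀ (norm_nonneg _) (norm_nonneg _), Complex.sq_norm, Complex.sq_norm,
    ← sub_pos, normSq_one_add_conj_mul_sub_normSq_add, ← Complex.sq_norm, ← Complex.sq_norm]
  exact mul_pos (by nlinarith [norm_nonneg b]) (by nlinarith [norm_nonneg u])

theorem differentiableOn_mobius (hb : b ∈ ball (0 : ℂ) 1) :
    DifferentiableOn ℂ (mobius b) (ball 0 1) := fun _ hu =>
  ((differentiableAt_id.add_const b).div ((differentiableAt_id.const_mul _).const_add 1)
    (one_add_conj_mul_ne_zero (mem_ball_zero_iff.1 hb)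
      (mem_ball_zero_iff.1 hu))).differentiableWithinAt

theorem mobius_neg_apply (a b : ℂ) : mobius (-b) a = (a - b) / (1 - conj b * a) := by
  simp [mobius, sub_eq_add_neg]

theorem mobius_mobius_neg (hb : b ∈ ball (0 : ℂ) 1) (ha : a ∈ ball (0 : ℂ) 1) :
    mobius b (mobius (-b) a) = a := by
  have hnb : -b ∈ ball (0 : ℂ) 1 := by simpa using hb
  have h₁ : 1 - conj b * a ≠ 0 := by
    simpa [sub_eq_add_neg] using one_add_conj_mul_ne_zero (mem_ball_zero_iff.1 hnb)
      (mem_ball_zero_iff.1 ha)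
  have h₂ := one_add_conj_mul_ne_zero (mem_ball_zero_iff.1 hb)
    (mem_ball_zero_iff.1 (mapsTo_mobius hnb ha))
  rw [mobius, div_eq_iff h₂, mobius_neg_apply]
  linear_combination div_mul_cancel₀ (a - b) h₁

theorem norm_mobius_neg (a b : ℂ) : ‖mobius (-b) a‖ = pseudoHyperbolicDist a b := by
  rw [mobius_neg_apply, norm_div, pseudoHyperbolicDist]

theorem norm_le_pseudoHyperbolicDist {δ : ℂ → ℂ} (hd : DifferentiableOn ℂ δ (ball 0 1))
    (hδ : MapsTo δ (ball 0 1) (ball 0 1)) (hb : b ∈ ball (0 : ℂ) 1) (hδb : δ b = 0)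
    (ha : a ∈ ball (0 : ℂ) 1) : ‖δ a‖ ≤ pseudoHyperbolicDist a b := by
  have hnb : -b ∈ ball (0 : ℂ) 1 := by simpa using hb
  have hschwarz := Complex.norm_le_norm_of_mapsTo_ball (hd.comp (differentiableOn_mobius hb)
    (mapsTo_mobius hb)) ((hδ.comp (mapsTo_mobius hb)).mono_right ball_subset_closedBall)
    (by simpa [mobius] using hδb) (mem_ball_zero_iff.1 (mapsTo_mobius hnb ha))
  rwa [Function.comp_apply, mobius_mobius_neg hb ha, norm_mobius_neg] at hschwarz

end SchwarzPick

section StolzAngle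

theorem re_conj_mul_eq (z w : ℂ) : (conj z * w).re = ‖z‖ * ‖w‖ * Real.cos (arg w - arg z) := by
  rcases eq_or_ne z 0 with rfl | hz
  · simp
  rcases eq_or_ne w 0 with rfl | hw
  · simp
  rw [Real.cos_sub, cos_arg hw, cos_arg hz, sin_arg, sin_arg, mul_re, conj_re, conj_im]
  field_simp
  ring

variable {ζ a b : ℂ} {α κ ρ ρ' : ℝ}

theorem stolzAngle_subset_stolzAngle (hα : α ≤ κ) : stolzAngle ζ α ρ ⊆ stolzAngle ζ κ ρ :=
  fun _ ⟨hz, harg, hdist⟩ => ⟨hz, harg.trans_le hα, hdist⟩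

theorem norm_mul_cos_le_re_of_mem_stolzAngle (hζ : ‖ζ‖ = 1) (hα : α ≤ Real.pi)
    (ha : a ∈ stolzAngle ζ α ρ) : ‖ζ - a‖ * Real.cos α ≤ (conj ζ * (ζ - a)).re := by
  rw [re_conj_mul_eq, hζ, one_mul, ← Real.cos_abs (arg (ζ - a) - arg ζ), abs_sub_comm]
  exact mul_le_mul_of_nonneg_left
    (Real.cos_le_cos_of_nonneg_of_le_pi (abs_nonneg _) hα ha.2.1.le) (norm_nonneg _)

theorem norm_sub_le_mul_norm_add_conj {p q : ℂ} {d k s : ℝ} (hd : 0 ≤ d) (hk : 0 ≤ k)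
    (hs : 0 ≤ s) (hks : k ^ 2 + s ^ 2 = 1) (hp : ‖p‖ = d) (hq : ‖q‖ = d)
    (hpk : d * k ≤ p.re) (hqk : d * k ≤ q.re) : ‖p - q‖ ≤ s * ‖p + conj q‖ := by
  have hp2 : p.re ^ 2 + p.im ^ 2 = d ^ 2 := by
    rw [← hp, Complex.sq_norm, normSq_apply]; ring
  have hq2 : q.re ^ 2 + q.im ^ 2 = d ^ 2 := by
    rw [← hq, Complex.sq_norm, normSq_apply]; ring
  have hsq : normSq (p - q) ≤ s ^ 2 * normSq (p + conj q) := by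
    simp only [normSq_apply, sub_re, sub_im, add_re, add_im, conj_re, conj_im]
    nlinarith [sq_nonneg (p.im * q.re + p.re * q.im), sq_nonneg (p.im + q.im),
      sq_nonneg (p.re - q.re), mul_nonneg hd hk]
  rw [← Complex.sq_norm, ← Complex.sq_norm, ← mul_pow] at hsq
  exact (pow_le_pow_iff_left₀ (norm_nonneg _) (by positivity) two_ne_zero).1 hsq

theorem pseudoHyperbolicDist_le_of_mem_stolzAngle (hζ : ‖ζ‖ = 1) (hκ : κ < Real.pi / 2)
    (ha : a ∈ stolzAngle ζ κ ρ) (hb : b ∈ stolzAngle ζ κ ρ') (hab : ‖ζ - a‖ = ‖ζ - b‖)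
    (hsmall : ‖ζ - a‖ ≤ Real.cos κ * (1 - Real.sin κ)) :
    pseudoHyperbolicDist a b ≤ 2 * Real.sin κ / (1 + Real.sin κ) := by
  set d := ‖ζ - a‖
  set k := Real.cos κ
  set s := Real.sin κ
  have hκ0 : 0 < κ := (abs_nonneg _).trans_lt ha.2.1
  have hk : 0 < k := Real.cos_pos_of_mem_Ioo ⟨by linarith [Real.pi_pos], hκ⟩
  have hs : 0 < s := Real.sin_pos_of_pos_of_lt_pi hκ0 (by linarith [Real.pi_pos])
  have hks : k ^ 2 + s ^ 2 = 1 := by rw [add_comm]; exact Real.sin_sq_add_cos_sq κ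
  have hs1 : s < 1 := by nlinarith
  have hζζ : conj ζ * ζ = 1 := by
    rw [← Complex.normSq_eq_conj_mul_self, normSq_eq_norm_sq, hζ]; norm_num
  -- rotating by `conj ζ` turns the Stolz angle into a sector around the positive real axis
  set p := conj ζ * (ζ - a) with hp
  set q := conj ζ * (ζ - b) with hq
  have hpd : ‖p‖ = d := by rw [hp, norm_mul, Complex.norm_conj, hζ, one_mul]
  have hqd : ‖q‖ = d := by rw [hq, norm_mul, Complex.norm_conj, hζ, one_mul, hab]
  have hpk : d * k ≤ p.re :=
    norm_mul_cos_le_re_of_mem_stolzAngle hζ (by linarith [Real.pi_pos]) ha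
  have hqk : d * k ≤ q.re :=
    hab ▸ norm_mul_cos_le_re_of_mem_stolzAngle hζ (by linarith [Real.pi_pos]) hb
  have hnum : ‖a - b‖ = ‖p - q‖ := by
    rw [norm_sub_rev p, show q - p = conj ζ * (a - b) by ring, norm_mul, Complex.norm_conj, hζ,
      one_mul]
  have hden : 1 - conj b * a = p + conj q - conj q * p := by
    simp only [hp, hq, map_mul, map_sub, Complex.conj_conj]
    linear_combination (conj ζ * ζ - 1 - conj ζ * a - ζ * conj b + conj b * a) * hζζ
  have hM : 2 * (d * k) ≤ ‖p + conj q‖ := by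
    have := Complex.re_le_norm (p + conj q)
    rw [add_re, conj_re] at this
    linarith
  have hdenM : ‖p + conj q‖ - d ^ 2 ≤ ‖1 - conj b * a‖ := by
    have := norm_sub_norm_le (p + conj q) (conj q * p)
    rwa [← hden, norm_mul, Complex.norm_conj, hpd, hqd, ← sq] at this
  have hd : 0 ≤ d := norm_nonneg _
  refine div_le_of_le_mul₀ (norm_nonneg _) (by positivity) ?_
  calc ‖a - b‖ = ‖p - q‖ := hnum
    _ ≤ s * ‖p + conj q‖ := norm_sub_le_mul_norm_add_conj hd hk.le hs.le hks hpd hqd hpk hqk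
    _ ≤ 2 * s / (1 + s) * (‖p + conj q‖ - d ^ 2) := by
        -- `d ≤ k (1 - s)` makes `d ^ 2` small against `‖p + conj q‖ ≥ 2 d k`
        rw [div_mul_eq_mul_div, le_div_iff₀ (by linarith)]
        nlinarith [mul_nonneg (mul_nonneg hs.le (sub_nonneg.2 hs1.le)) (sub_nonneg.2 hM),
          mul_nonneg (mul_nonneg hs.le hd) (sub_nonneg.2 hsmall)]
    _ ≤ 2 * s / (1 + s) * ‖1 - conj b * a‖ := by gcongr

end StolzAngle

theorem norm_sub_pos_of_mem_ball {ζ a : ℂ} (hζ : ‖ζ‖ = 1) (ha : a ∈ ball (0 : ℂ) 1) :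
    0 < ‖ζ - a‖ := by
  refine norm_pos_iff.2 (sub_ne_zero.2 fun h => ?_)
  have := mem_ball_zero_iff.1 ha
  rw [← h, hζ] at this
  exact lt_irrefl _ this

theorem exists_mem_closedBall_apply_eq_of_pseudoHyperbolicDist_le {γ : ℂ → ℂ} {a : ℂ} {c : ℝ}
    (hbij : BijOn γ (ball 0 1) (ball 0 1)) (hd : DifferentiableOn ℂ γ (ball 0 1))
    (ha : a ∈ ball (0 : ℂ) 1) (hc : pseudoHyperbolicDist a (γ 0) ≤ c) :
    ∃ z ∈ closedBall (0 : ℂ) c, γ z = a := by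
  have h0 : (0 : ℂ) ∈ ball 0 1 := mem_ball_self one_pos
  set δ := Function.invFunOn γ (ball 0 1)
  have hinv : InvOn δ γ (ball 0 1) (ball 0 1) := hbij.invOn_invFunOn
  have hmaps : MapsTo δ (ball 0 1) (ball 0 1) := hbij.surjOn.mapsTo_invFunOn
  refine ⟨δ a, mem_closedBall_zero_iff.2 (le_trans ?_ hc), hinv.2 ha⟩
  exact norm_le_pseudoHyperbolicDist
    (differentiableOn_of_invOn isOpen_ball isOpen_ball hd hinv hmaps) hmaps (hbij.mapsTo h0)
    (hinv.1 h0) ha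

theorem LandsAt.exists_norm_sub_eq {η : ℝ → ℂ} {ζ : ℂ} (hη : LandsAt η ζ) (hζ : ‖ζ‖ = 1)
    {U : Set ℝ} (hU : U ∈ 𝓝[<] (1 : ℝ)) :
    ∃ ε > 0, ∀ d, 0 < d → d ≤ ε → ∃ t ∈ U, ‖ζ - η t‖ = d := by
  obtain ⟨hcont, hmaps, hlim⟩ := hη
  obtain ⟨l, hl : l < 1, hlU⟩ := mem_nhdsLT_iff_exists_Ioo_subset.1 hU
  set r := max 0 ((l + 1) / 2)
  have hr : r ∈ Ico (0 : ℝ) 1 := ⟨le_max_left _ _, max_lt one_pos (by linarith)⟩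
  have hlr : l < r := lt_max_of_lt_right (by linarith)
  refine ⟨‖ζ - η r‖, norm_sub_pos_of_mem_ball hζ (hmaps hr), fun d hd hdr => ?_⟩
  have hnear : ∀ᶠ u in 𝓝[<] (1 : ℝ), ‖ζ - η u‖ < d := by
    have := (tendsto_const_nhds (x := ζ)).sub hlim |>.norm
    rw [sub_self, norm_zero] at this
    exact this.eventually (gt_mem_nhds hd)
  obtain ⟨u, hud, hu⟩ := (hnear.and (Ioo_mem_nhdsLT hr.2)).exists
  have hdist : ContinuousOn (fun t => ‖ζ - η t‖) (Icc r u) :=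
    (continuousOn_const.sub (hcont.mono (Icc_subset_Ico hr.1 hu.2))).norm
  obtain ⟨t, ht, htd⟩ := intermediate_value_Icc' hu.1.le hdist ⟨hud.le, hdr⟩
  exact ⟨t, hlU ⟨hlr.trans_le ht.1, ht.2.trans_lt hu.2⟩, htd⟩

theorem exists_mem_clusterAlong_of_frequently {f : ℂ → RSphere} {η : ℝ → ℂ} {K : Set ℂ}
    (hK : IsCompact K) (hf : ContinuousOn f K)
    (h : ∃ᶠ t in 𝓝[<] (1 : ℝ), ∃ z ∈ K, f (η t) = f z) : ∃ z ∈ K, f z ∈ clusterAlong f η := by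
  obtain ⟨t, ht, hprop⟩ :=
    exists_seq_forall_of_frequently (h.and_eventually (Ico_mem_nhdsLT one_pos))
  choose z hzK hz using fun n => (hprop n).1
  obtain ⟨z₀, hz₀, φ, hφ, hlim⟩ := hK.tendsto_subseq hzK
  refine ⟨z₀, hz₀, t ∘ φ, fun n => (hprop (φ n)).2,
    (tendsto_nhds_of_tendsto_nhdsWithin ht).comp hφ.tendsto_atTop, ?_⟩
  have := (hf z₀ hz₀).tendsto.comp
    (tendsto_nhdsWithin_iff.2 ⟨hlim, Eventually.of_forall fun n => hzK (φ n)⟩)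
  simpa [Function.comp_def, hz] using this

theorem frequently_exists_mem_closedBall_of_mem_ntLimitSet {f : ℂ → RSphere} {ζ : ℂ}
    {η : ℝ → ℂ} (hζ : ζ ∈ ntLimitSet f) (hη : LandsNontangentiallyAt η ζ) :
    ∃ c < 1, ∃ᶠ t in 𝓝[<] (1 : ℝ), ∃ z ∈ closedBall (0 : ℂ) c, f (η t) = f z := by
  obtain ⟨hζC, γ, hγ, hlim, α, ρ, hα0, hα, -, hγα⟩ := hζ
  obtain ⟨hηl, α', ρ', -, hα', -, hηα'⟩ := hη
  have hζ1 : ‖ζ‖ = 1 := by simpa [unitC] using hζC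
  set κ := max α α'
  have hκ0 : 0 < κ := lt_max_of_lt_left hα0
  have hκ : κ < Real.pi / 2 := max_lt hα hα'
  have hs0 : 0 < Real.sin κ := Real.sin_pos_of_pos_of_lt_pi hκ0 (by linarith [Real.pi_pos])
  have hs1 : Real.sin κ < 1 := by
    simpa using Real.sin_lt_sin_of_lt_of_le_pi_div_two (by linarith) le_rfl hκ
  have hc1 : 2 * Real.sin κ / (1 + Real.sin κ) < 1 := by
    rw [div_lt_one (by linarith)]; linarith
  have hd₀ : 0 < Real.cos κ * (1 - Real.sin κ) :=
    mul_pos (Real.cos_pos_of_mem_Ioo ⟨by linarith, hκ⟩) (by linarith)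
  refine ⟨_, hc1, frequently_iff.2 fun {U} hU => ?_⟩
  have hU' : U ∩ {t | η t ∈ stolzAngle ζ κ ρ'} ∈ 𝓝[<] (1 : ℝ) :=
    inter_mem hU (hηα'.mono fun t ht => stolzAngle_subset_stolzAngle (le_max_right _ _) ht)
  obtain ⟨ε, hε, hεt⟩ := hηl.exists_norm_sub_eq hζ1 hU'
  have hdist : Tendsto (fun n => ‖ζ - γ n 0‖) atTop (𝓝 0) := by
    simpa using ((tendsto_const_nhds (x := ζ)).sub hlim).norm
  obtain ⟨n, hn⟩ := (hdist.eventually (gt_mem_nhds (lt_min hε hd₀))).exists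
  have hγn : γ n 0 ∈ stolzAngle ζ κ ρ := stolzAngle_subset_stolzAngle (le_max_left _ _) (hγα n)
  obtain ⟨t, ⟨htU, htS⟩, htd⟩ :=
    hεt _ (norm_sub_pos_of_mem_ball hζ1 hγn.1) (hn.le.trans (min_le_left _ _))
  obtain ⟨z, hz, hγz⟩ := exists_mem_closedBall_apply_eq_of_pseudoHyperbolicDist_le
    (hγ n).bijOn (hγ n).holo htS.1
    (pseudoHyperbolicDist_le_of_mem_stolzAngle hζ1 hκ htS hγn htd
      (htd ▸ hn.le.trans (min_le_right _ _)))
  exact ⟨t, htU, z, hz, by rw [← hγz, (hγ n).deck z (closedBall_subset_ball hc1 hz)]⟩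

theorem landsNontangentiallyAt_ofReal_mul {ζ : ℂ} (hζ : ‖ζ‖ = 1) :
    LandsNontangentiallyAt (fun t : ℝ => (t : ℂ) * ζ) ζ := by
  have hcont : Continuous fun t : ℝ => (t : ℂ) * ζ := by fun_prop
  have hnorm : ∀ t : ℝ, 0 ≤ t → ‖(t : ℂ) * ζ‖ = t := fun t ht => by
    rw [norm_mul, Complex.norm_real, Real.norm_of_nonneg ht, hζ, mul_one]
  refine ⟨⟨hcont.continuousOn, fun t ht => ?_, ?_⟩, Real.pi / 4, 1, by positivity,
    by linarith [Real.pi_pos], one_pos, ?_⟩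
  · rw [unitD, mem_ball_zero_iff, hnorm t ht.1]
    exact ht.2
  · simpa using (hcont.tendsto 1).mono_left nhdsWithin_le_nhds
  filter_upwards [Ioo_mem_nhdsLT one_pos] with t ht
  have hsub : ζ - (t : ℂ) * ζ = ((1 - t : ℝ) : ℂ) * ζ := by push_cast; ring
  refine ⟨?_, ?_, ?_⟩
  · rw [unitD, mem_ball_zero_iff, hnorm t ht.1.le]
    exact ht.2
  · rw [hsub, arg_real_mul _ (sub_pos.2 ht.2), sub_self, abs_zero]
    positivity
  · rw [hsub, hnorm _ (sub_pos.2 ht.2).le]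
    linarith [ht.1]

theorem IsUniversalCovering.continuousOn {f : ℂ → RSphere} {Ω : Set RSphere}
    (hf : IsUniversalCovering f Ω) : ContinuousOn f unitD := by
  rw [continuousOn_iff_continuous_domRestrict]
  exact continuous_subtype_val.comp hf.covering.continuous

theorem cluster_meets_domain_of_nt_general (Ω : Set RSphere) (f : ℂ → RSphere)
    (hcov : IsUniversalCovering f Ω)
    (ζ : ℂ) (hζ : ζ ∈ ntLimitSet f) :
    (∀ η : ℝ → ℂ, LandsNontangentiallyAt η ζ → (clusterAlong f η ∩ Ω).Nonempty) ∧
    (angularCluster f ζ ∩ Ω).Nonempty := by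
  have hcluster : ∀ η : ℝ → ℂ, LandsNontangentiallyAt η ζ → (clusterAlong f η ∩ Ω).Nonempty := by
    intro η hη
    obtain ⟨c, hc, hfreq⟩ := frequently_exists_mem_closedBall_of_mem_ntLimitSet hζ hη
    have hball : closedBall (0 : ℂ) c ⊆ unitD := closedBall_subset_ball hc
    obtain ⟨z, hz, hzη⟩ := exists_mem_clusterAlong_of_frequently (isCompact_closedBall 0 c)
      (hcov.continuousOn.mono hball) hfreq
    exact ⟨f z, hzη, hcov.mapsTo (hball hz)⟩
  have hradial := landsNontangentiallyAt_ofReal_mul (ζ := ζ) (by simpa [unitC] using hζ.1)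
  obtain ⟨w, hw, hwΩ⟩ := hcluster _ hradial
  exact ⟨hcluster, w, mem_biUnion hradial hw, hwΩ⟩

/-- If `ζ ∈ Λ_NT`, then the cluster set along any curve landing
non-tangentially at `ζ` meets `Ω`; in particular so does the angular cluster set. -/
theorem cluster_meets_domain_of_nt (Ω : Set RSphere) (f : ℂ → RSphere)
    (hdom : IsHyperbolicDomain Ω) (hmc : IsMultiplyConnected Ω)
    (hcov : IsUniversalCovering f Ω)
    (ζ : ℂ) (hζ : ζ ∈ ntLimitSet f) :
    (∀ η : ℝ → ℂ, LandsNontangentiallyAt η ζ → (clusterAlong f η ∩ Ω).Nonempty) ∧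
    (angularCluster f ζ ∩ Ω).Nonempty :=
  cluster_meets_domain_of_nt_general Ω f hcov ζ hζ
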